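/- Let ω = (ω_n)_{n≥0} ∈ {0,1}^ℕ satisfy that the asymptotic frequency of 0's equals 1/2, i.e. (1/n)·#{k < n : ω_k = 0} → 1/2. Let 0 < c < 1/2, a = 1/(2(1−c)), b = 1/(2c), and f₀, f₁ the piecewise linear maps as above. Let x₀ ∈ (0,1) and define x_{n+1} = f_{ω_n}(x_n). Then there are infinitely many n with x_n ≤ 1/2 and infinitely many n with x_n ≥ 1/2. -/

import Mathlib

/-!
While the orbit stays below `1/2`, every step multiplies `x n` by `a = 1/(2(1-c))` or by
`b = 1/(2c)` according to `ω n`: taking the other branch of either map lands above `1/2`.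
As `0` has frequency `1/2` in `ω` and `ab > 1`, these products grow like `(ab)^(n/2)`, which is
incompatible with `x n < 1/2`. Conjugation by `x ↦ 1 - x` exchanges `f₀` and `f₁`, so the
same argument applied to `1 - x n` rules out an orbit that eventually stays above `1/2`.
-/

noncomputable def f₀ (c x : ℝ) : ℝ :=
  if x ≤ 1 - c then x / (2*(1-c)) else 1 - (1-x) / (2*c)

noncomputable def f₁ (c x : ℝ) : ℝ :=
  if x ≤ c then x / (2*c) else 1 - (1-x) / (2*(1-c))

open Filter Real Finset Topology

lemma tendsto_prod_range_ite_atTop {s : ℕ → Prop} [DecidablePred s] {θ p q : ℝ}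
    (hp : 0 < p) (hq : 0 < q) (hpq : 0 < θ * log p + (1 - θ) * log q)
    (hs : Tendsto (fun n => (#{k ∈ range n | s k} : ℝ) / n) atTop (𝓝 θ)) :
    Tendsto (fun n => ∏ k ∈ range n, if s k then p else q) atTop atTop := by
  have hlog : ∀ n : ℕ, log (∏ k ∈ range n, if s k then p else q)
      = n * (log q + (#{k ∈ range n | s k} : ℝ) / n * (log p - log q)) := by
    intro n
    have hcard : (#{k ∈ range n | s k} : ℝ) + #{k ∈ range n | ¬s k} = n := by
      exact_mod_cast (card_filter_add_card_filter_not s).trans (card_range n)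
    rw [log_prod fun k _ => by split_ifs <;> positivity]
    simp only [apply_ite log, sum_ite, sum_const, nsmul_eq_mul]
    rcases n.eq_zero_or_pos with rfl | hn
    · simp
    · have hn' : (n : ℝ) ≠ 0 := by positivity
      field_simp
      linear_combination log q * hcard
  have hexponent : Tendsto (fun n : ℕ => log (∏ k ∈ range n, if s k then p else q))
      atTop atTop := by
    simp only [hlog]
    refine tendsto_natCast_atTop_atTop.atTop_mul_pos (C := θ * log p + (1 - θ) * log q) hpq ?_
    convert (hs.mul_const (log p - log q)).const_add (log q) using 2
    ring
  refine (tendsto_exp_atTop.comp hexponent).congr fun n => ?_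
  exact exp_log (prod_pos fun k _ => by split_ifs <;> positivity)

lemma tendsto_atTop_of_succ_eq_mul {m y : ℕ → ℝ} {N : ℕ} (hm : ∀ k, 0 < m k) (hyN : 0 < y N)
    (hrec : ∀ n ≥ N, y (n + 1) = m n * y n)
    (hprod : Tendsto (fun n => ∏ k ∈ range n, m k) atTop atTop) :
    Tendsto y atTop atTop := by
  have hPN : 0 < ∏ k ∈ range N, m k := prod_pos fun k _ => hm k
  have hy : ∀ n ≥ N, y n = y N / (∏ k ∈ range N, m k) * ∏ k ∈ range n, m k := by
    intro n hn
    induction n, hn using Nat.le_induction with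
    | base => field_simp
    | succ n hn ih => rw [hrec n hn, ih, prod_range_succ]; ring
  refine (hprod.const_mul_atTop (div_pos hyN hPN)).congr' ?_
  filter_upwards [eventually_ge_atTop N] with n hn
  exact (hy n hn).symm

lemma frequently_le_of_succ_eq_mul {s : ℕ → Prop} [DecidablePred s] {θ p q B : ℝ} {y : ℕ → ℝ}
    (hp : 0 < p) (hq : 0 < q) (hpq : 0 < θ * log p + (1 - θ) * log q)
    (hs : Tendsto (fun n => (#{k ∈ range n | s k} : ℝ) / n) atTop (𝓝 θ))
    (hy : ∀ n, 0 < y n) (hrec : ∀ n, y (n + 1) < B → y (n + 1) = (if s n then p else q) * y n) :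
    ∃ᶠ n in atTop, B ≤ y n := by
  by_contra hbelow
  obtain ⟨N, hN⟩ := eventually_atTop.mp (not_frequently.mp hbelow)
  have hgrow : Tendsto y atTop atTop :=
    tendsto_atTop_of_succ_eq_mul (fun k => by split_ifs <;> assumption) (hy N)
      (fun n hn => hrec n (not_le.mp (hN (n + 1) (by omega))))
      (tendsto_prod_range_ite_atTop hp hq hpq hs)
  obtain ⟨n, hBn, hNn⟩ := ((hgrow.eventually_ge_atTop B).and (eventually_ge_atTop N)).exists
  exact hN n hNn hBn

section maps

variable {c x : ℝ}

lemma one_sub_f₀_one_sub (hc0 : 0 < c) (hc1 : c < 1) : 1 - f₀ c (1 - x) = f₁ c x := by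
  have hc1' : 1 - c ≠ 0 := by linarith
  unfold f₀ f₁
  split_ifs with h₀ h₁ h₁
  · obtain rfl : x = c := by linarith
    field_simp
    ring
  · rfl
  · ring
  · linarith

lemma f₀_mem_Ioo (hc0 : 0 < c) (hc1 : c < 1) (hx : x ∈ Set.Ioo 0 1) : f₀ c x ∈ Set.Ioo 0 1 := by
  obtain ⟨hx0, hx1⟩ := hx
  have hc1' : 0 < 1 - c := by linarith
  unfold f₀
  split_ifs with h
  · exact ⟨by positivity, by rw [div_lt_one (by positivity)]; linarith⟩
  · have hpos : 0 < (1 - x) / (2 * c) := div_pos (by linarith) (by positivity)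
    have hlt : (1 - x) / (2 * c) < 1 := by rw [div_lt_one (by positivity)]; linarith
    exact ⟨by linarith, by linarith⟩

lemma f₁_mem_Ioo (hc0 : 0 < c) (hc1 : c < 1) (hx : x ∈ Set.Ioo 0 1) : f₁ c x ∈ Set.Ioo 0 1 := by
  obtain ⟨h0, h1⟩ := f₀_mem_Ioo (x := 1 - x) hc0 hc1 ⟨by linarith [hx.2], by linarith [hx.1]⟩
  rw [← one_sub_f₀_one_sub hc0 hc1]
  constructor <;> linarith

lemma f₀_eq_mul_of_lt_half (hc0 : 0 < c) (h : f₀ c x < 1 / 2) :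
    f₀ c x = 1 / (2 * (1 - c)) * x := by
  unfold f₀ at *
  split_ifs at * with hx
  · ring
  · have : (1 - x) / (2 * c) < 1 / 2 := by rw [div_lt_iff₀ (by positivity)]; linarith
    linarith

lemma f₁_eq_mul_of_lt_half (hc1 : c < 1) (h : f₁ c x < 1 / 2) :
    f₁ c x = 1 / (2 * c) * x := by
  unfold f₁ at *
  split_ifs at * with hx
  · ring
  · have : (1 - x) / (2 * (1 - c)) < 1 / 2 := by
      rw [div_lt_iff₀ (by linarith)]; linarith
    linarith

lemma one_sub_f₀_eq_mul_of_half_lt (hc0 : 0 < c) (hc1 : c < 1) (h : 1 / 2 < f₀ c x) :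
    1 - f₀ c x = 1 / (2 * c) * (1 - x) := by
  have hsymm : 1 - f₀ c x = f₁ c (1 - x) := by
    simpa using one_sub_f₀_one_sub (x := 1 - x) hc0 hc1
  rw [hsymm]
  exact f₁_eq_mul_of_lt_half hc1 (by linarith)

lemma one_sub_f₁_eq_mul_of_half_lt (hc0 : 0 < c) (hc1 : c < 1) (h : 1 / 2 < f₁ c x) :
    1 - f₁ c x = 1 / (2 * (1 - c)) * (1 - x) := by
  rw [← one_sub_f₀_one_sub hc0 hc1] at h ⊢
  rw [sub_sub_cancel]
  exact f₀_eq_mul_of_lt_half hc0 (by linarith)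

lemma log_add_log_pos (hc0 : 0 < c) (hc1 : c < 1) (hc : c ≠ 1 / 2) :
    0 < log (1 / (2 * (1 - c))) + log (1 / (2 * c)) := by
  have hc1' : 0 < 1 - c := by linarith
  rw [← log_mul (by positivity) (by positivity)]
  apply log_pos
  rw [div_mul_div_comm, one_mul, one_lt_div (by positivity)]
  nlinarith [sq_pos_of_ne_zero (sub_ne_zero.mpr hc)]

end maps

theorem stmt_13 (c : ℝ) (hc0 : 0 < c) (hc1 : c < 1/2)
    (ω : ℕ → Fin 2)
    (hfreq : Filter.Tendsto
      (fun n => (((Finset.range n).filter (fun k => ω k = 0)).card : ℝ) / n)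
      Filter.atTop (nhds (1/2)))
    (x : ℕ → ℝ) (hx0 : x 0 ∈ Set.Ioo (0:ℝ) 1)
    (hstep : ∀ n, x (n+1) = if ω n = 0 then f₀ c (x n) else f₁ c (x n)) :
    (∃ᶠ n in Filter.atTop, x n ≤ 1/2) ∧ (∃ᶠ n in Filter.atTop, 1/2 ≤ x n) := by
  have hc1' : c < 1 := by linarith
  have hx : ∀ n, x n ∈ Set.Ioo 0 1 := by
    intro n
    induction n with
    | zero => exact hx0
    | succ n ih =>
      rw [hstep n]
      split_ifs
      · exact f₀_mem_Ioo hc0 hc1' ih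
      · exact f₁_mem_Ioo hc0 hc1' ih
  have ha : 0 < 1 / (2 * (1 - c)) := by rw [one_div_pos]; linarith
  have hb : 0 < 1 / (2 * c) := by positivity
  have hlog := log_add_log_pos hc0 hc1' hc1.ne
  constructor
  · have hhigh := frequently_le_of_succ_eq_mul (B := 1 / 2) (y := fun n => 1 - x n)
      (p := 1 / (2 * c)) (q := 1 / (2 * (1 - c))) hb ha (by linarith)
      hfreq (fun n => by linarith [(hx n).2]) fun n hn => by
        rw [hstep n] at hn ⊢
        split_ifs at hn ⊢
        · exact one_sub_f₀_eq_mul_of_half_lt hc0 hc1' (by linarith)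
        · exact one_sub_f₁_eq_mul_of_half_lt hc0 hc1' (by linarith)
    exact hhigh.mono fun n hn => by linarith
  · refine frequently_le_of_succ_eq_mul (p := 1 / (2 * (1 - c))) (q := 1 / (2 * c))
      ha hb (by linarith) hfreq (fun n => (hx n).1) fun n hn => ?_
    rw [hstep n] at hn ⊢
    split_ifs at hn ⊢
    · exact f₀_eq_mul_of_lt_half hc0 hn
    · exact f₁_eq_mul_of_lt_half hc1' hn
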